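/- Let d ≥ 2, let Ω' ⊂ ℝ^{d−1} be a nonempty bounded open set, let M > 0, and let F : ℝ^{d−1} → ℝ satisfy 0 ≤ F(x') ≤ M for all x' ∈ Ω'. Set Ω = { (x', t) ∈ ℝ^{d−1} × ℝ : x' ∈ Ω', 0 < t < F(x') }. Then for every continuously differentiable function ψ : ℝ^{d−1} × ℝ → ℝ with ψ(x', 0) = 0 for all x' ∈ Ω', one has ∫_Ω ‖∇ψ‖² dx ≥ (π²/(4M²)) ∫_Ω ψ² dx. (Consequently the first eigenvalue of the Laplacian on Ω with Dirichlet conditions on the base Ω'×{0} and Neumann conditions on the rest of the boundary is at least π²/(4M²).) -/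

import Mathlib

open MeasureTheory Real Filter intervalIntegral
set_option maxHeartbeats 1000000

noncomputable section

/-- Euclidean space `ℝ^d`. -/
abbrev Euc (d : ℕ) := EuclideanSpace ℝ (Fin d)

/-- The Rayleigh quotient of a function `u` on a set `Ω ⊆ ℝ^d`. -/
noncomputable def rayleigh {d : ℕ} (Ω : Set (Euc d)) (u : Euc d → ℝ) : ℝ :=
  (∫ x in Ω, ‖fderiv ℝ u x‖ ^ 2) / (∫ x in Ω, (u x) ^ 2)

/-- The `k`-th Neumann eigenvalue of `Ω ⊆ ℝ^d`, defined by the variational (min-max)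
principle: the infimum, over all subspaces `V` of smooth functions `ℝ^d → ℝ` whose space of
restrictions to `Ω` is `(k+1)`-dimensional, of the supremum of the Rayleigh quotient over
the elements of `V` that are nonzero in `L²(Ω)`. -/
noncomputable def neumannEigenvalue {d : ℕ} (k : ℕ) (Ω : Set (Euc d)) : ℝ :=
  sInf { t : ℝ | ∃ V : Submodule ℝ (Euc d → ℝ),
    (∀ u ∈ V, ContDiff ℝ (⊤ : ℕ∞) u) ∧
    Module.finrank ℝ (V.map (LinearMap.funLeft ℝ ℝ ((↑) : Ω → Euc d))) = k + 1 ∧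
    t = sSup { r : ℝ | ∃ u ∈ V, (0 < ∫ x in Ω, (u x) ^ 2) ∧ r = rayleigh Ω u } }

/-- A nonempty bounded convex open subset of `ℝ^d`. -/
def IsConvexDomain {d : ℕ} (Ω : Set (Euc d)) : Prop :=
  Ω.Nonempty ∧ IsOpen Ω ∧ Bornology.IsBounded Ω ∧ Convex ℝ Ω

/-- The optimal constant `α_{k,d}`: the infimum of `μ_k(Ω₁)/μ_k(Ω₂)` over all pairs of
nonempty bounded convex open sets `Ω₁ ⊆ Ω₂ ⊂ ℝ^d`. -/
noncomputable def alphaConst (k d : ℕ) : ℝ :=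
  sInf { r : ℝ | ∃ Ω₁ Ω₂ : Set (Euc d), IsConvexDomain Ω₁ ∧ IsConvexDomain Ω₂ ∧ Ω₁ ⊆ Ω₂ ∧
    r = neumannEigenvalue k Ω₁ / neumannEigenvalue k Ω₂ }

/-- The Bessel function of the first kind of order `ν` (for `x > 0`). -/
noncomputable def besselJ (ν : ℝ) (x : ℝ) : ℝ :=
  ∑' m : ℕ, ((-1 : ℝ) ^ m / (m.factorial * Real.Gamma (m + ν + 1))) * (x / 2) ^ (2 * (m : ℝ) + ν)

/-- The first positive zero `j_{ν,1}` of the Bessel function `J_ν`. -/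
noncomputable def besselZero1 (ν : ℝ) : ℝ :=
  sInf {x : ℝ | 0 < x ∧ besselJ ν x = 0}

/-- The second positive zero `j_{ν,2}` of the Bessel function `J_ν`. -/
noncomputable def besselZero2 (ν : ℝ) : ℝ :=
  sInf {x : ℝ | besselZero1 ν < x ∧ besselJ ν x = 0}

lemma oneD_eps (c : ℝ) (hcpos : 0 < c) (L : ℝ) (hL : 0 < L) (hcL : c * L ≤ π/2)
    (f : ℝ → ℝ) (hf : ContDiff ℝ 1 f)
    (ε : ℝ) (hε : 0 < ε) (hεL : ε < L) :
    c^2 * ∫ t in ε..L, (f t)^2 ≤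
      (∫ t in ε..L, (deriv f t)^2) + (f ε)^2 * (c * (Real.cos (c*ε) / Real.sin (c*ε))) := by
  have hsin : ∀ t ∈ Set.Icc ε L, 0 < Real.sin (c*t) := by
    intro t ht
    apply Real.sin_pos_of_pos_of_lt_pi (mul_pos hcpos (lt_of_lt_of_le hε ht.1))
    have : c * t ≤ c * L := by nlinarith [ht.2]
    linarith [Real.pi_pos]
  set h : ℝ → ℝ := fun t => c * (Real.cos (c*t) / Real.sin (c*t)) with hh
  set H' : ℝ → ℝ := fun t => -c^2 / (Real.sin (c*t))^2 with hH'
  have hderivh : ∀ t ∈ Set.Icc ε L, HasDerivAt h (H' t) t := by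
    intro t ht
    have hs := hsin t ht
    have h1 : HasDerivAt (fun t => Real.cos (c*t)) (-Real.sin (c*t) * c) t := by
      simpa [Function.comp_def] using (Real.hasDerivAt_cos (c*t)).comp t ((hasDerivAt_id t).const_mul c)
    have h2 : HasDerivAt (fun t => Real.sin (c*t)) (Real.cos (c*t) * c) t := by
      simpa [Function.comp_def] using (Real.hasDerivAt_sin (c*t)).comp t ((hasDerivAt_id t).const_mul c)
    have key := ((h1.div h2 hs.ne').const_mul c)
    convert key using 1
    · rfl
    · rfl
    · rfl
    have h3 := Real.sin_sq_add_cos_sq (c*t)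
    rw [hH']
    field_simp
    linear_combination h3
  have hident : ∀ t ∈ Set.Icc ε L, (h t)^2 + H' t = -c^2 := by
    intro t ht
    have hs := hsin t ht
    have h3 := Real.sin_sq_add_cos_sq (c*t)
    rw [hh, hH']
    field_simp
    linear_combination h3
  have huIcc : Set.uIcc ε L = Set.Icc ε L := Set.uIcc_of_le hεL.le
  have hfd : ∀ t, HasDerivAt f (deriv f t) t :=
    fun t => ((hf.differentiable one_ne_zero) t).hasDerivAt
  have hf2d : ∀ t ∈ Set.uIcc ε L, HasDerivAt (fun t => (f t)^2) (2 * f t * deriv f t) t := by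
    intro t _
    have := (hfd t).mul (hfd t)
    convert this using 1
    · rfl
    · rfl
    · funext y; rw [Pi.mul_apply]; ring
    · ring
  have hcf : Continuous f := hf.continuous
  have hcontd : Continuous (deriv f) := hf.continuous_deriv le_rfl
  have hcsin : Continuous (fun t => Real.sin (c*t)) :=
    Real.continuous_sin.comp (continuous_const.mul continuous_id)
  have hccos : Continuous (fun t => Real.cos (c*t)) :=
    Real.continuous_cos.comp (continuous_const.mul continuous_id)
  have hsne : ∀ t ∈ Set.Icc ε L, Real.sin (c*t) ≠ 0 := fun t ht => (hsin t ht).ne'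
  have hconth : ContinuousOn h (Set.Icc ε L) :=
    continuousOn_const.mul (ContinuousOn.div hccos.continuousOn hcsin.continuousOn hsne)
  have hcontH' : ContinuousOn H' (Set.Icc ε L) :=
    ContinuousOn.div continuousOn_const (hcsin.continuousOn.pow 2)
      (fun t ht => pow_ne_zero 2 (hsne t ht))
  have hint1 : IntervalIntegrable (fun t => 2 * f t * deriv f t) volume ε L :=
    ((continuous_const.mul hcf).mul hcontd).intervalIntegrable ε L
  have hint2 : IntervalIntegrable H' volume ε L :=
    ContinuousOn.intervalIntegrable (huIcc ▸ hcontH')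
  have hintA : IntervalIntegrable (fun t => 2 * f t * deriv f t * h t) volume ε L :=
    ContinuousOn.intervalIntegrable
      (huIcc ▸ ((((continuous_const.mul hcf).mul hcontd).continuousOn).mul hconth))
  have hintB : IntervalIntegrable (fun t => c^2 * (f t)^2) volume ε L :=
    (continuous_const.mul (hcf.pow 2)).intervalIntegrable ε L
  have hintC : IntervalIntegrable (fun t => (f t)^2 * H' t) volume ε L :=
    ContinuousOn.intervalIntegrable (huIcc ▸ (((hcf.pow 2).continuousOn).mul hcontH'))
  have parts : ∫ t in ε..L, (f t)^2 * H' t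
      = (f L)^2 * h L - (f ε)^2 * h ε - ∫ t in ε..L, (2 * f t * deriv f t) * h t :=
    integral_mul_deriv_eq_deriv_mul hf2d (fun t ht => hderivh t (huIcc ▸ ht)) hint1 hint2
  have key : ∫ t in ε..L, (2 * f t * deriv f t * h t + c^2 * (f t)^2 + (f t)^2 * H' t)
      ≤ ∫ t in ε..L, (deriv f t)^2 := by
    apply integral_mono_on hεL.le ((hintA.add hintB).add hintC)
      ((hcontd.pow 2).intervalIntegrable ε L)
    intro t ht
    have hi := hident t ht
    show 2 * f t * deriv f t * h t + c^2 * (f t)^2 + (f t)^2 * H' t ≤ (deriv f t)^2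
    nlinarith [sq_nonneg (deriv f t - f t * h t)]
  have hsplit : ∫ t in ε..L, (2 * f t * deriv f t * h t + c^2 * (f t)^2 + (f t)^2 * H' t)
      = (∫ t in ε..L, 2 * f t * deriv f t * h t) + (∫ t in ε..L, c^2 * (f t)^2)
        + ∫ t in ε..L, (f t)^2 * H' t := by
    rw [intervalIntegral.integral_add (hintA.add hintB) hintC,
        intervalIntegral.integral_add hintA hintB]
  have hconstmul : (∫ t in ε..L, c^2 * (f t)^2) = c^2 * ∫ t in ε..L, (f t)^2 :=
    intervalIntegral.integral_const_mul _ _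
  have hLge : 0 ≤ (f L)^2 * h L := by
    apply mul_nonneg (sq_nonneg _)
    apply mul_nonneg hcpos.le
    apply div_nonneg _ (hsin L ⟨hεL.le, le_rfl⟩).le
    apply Real.cos_nonneg_of_mem_Icc
    constructor
    · nlinarith [Real.pi_pos]
    · nlinarith
  rw [hsplit, hconstmul, parts] at key
  have hfε : h ε = c * (Real.cos (c*ε) / Real.sin (c*ε)) := rfl
  rw [← hfε]
  linarith [key, hLge]


lemma oneD (c : ℝ) (hcpos : 0 < c) (L : ℝ) (hL0 : 0 ≤ L) (hcL : c * L ≤ π/2)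
    (f : ℝ → ℝ) (hf : ContDiff ℝ 1 f) (hf0 : f 0 = 0) :
    c^2 * ∫ t in Set.Ioo 0 L, (f t)^2 ≤ ∫ t in Set.Ioo 0 L, (deriv f t)^2 := by
  rcases eq_or_lt_of_le hL0 with rfl | hL
  · simp
  have hcf : Continuous f := hf.continuous
  have hcontd : Continuous (deriv f) := hf.continuous_deriv le_rfl
  have hIoo : ∀ g : ℝ → ℝ, (∫ t in Set.Ioo 0 L, g t) = ∫ t in (0:ℝ)..L, g t := by
    intro g
    rw [intervalIntegral.integral_of_le hL0, MeasureTheory.integral_Ioc_eq_integral_Ioo]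
  rw [hIoo, hIoo]
  obtain ⟨C, hC⟩ := isCompact_Icc.exists_bound_of_continuousOn
    (hcontd.continuousOn : ContinuousOn (deriv f) (Set.Icc 0 L))
  have hC0 : 0 ≤ C := le_trans (norm_nonneg _) (hC 0 ⟨le_rfl, hL0⟩)
  obtain ⟨D, hD⟩ := isCompact_Icc.exists_bound_of_continuousOn
    ((hcf.pow 2).continuousOn : ContinuousOn (fun t => (f t)^2) (Set.Icc 0 L))
  have hD' : ∀ t ∈ Set.Icc 0 L, (f t)^2 ≤ D := by
    intro t ht
    have := hD t ht
    rwa [Real.norm_eq_abs, abs_of_nonneg (sq_nonneg _)] at this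
  have hD0 : 0 ≤ D := le_trans (sq_nonneg _) (hD' 0 ⟨le_rfl, hL0⟩)
  set A := ∫ t in (0:ℝ)..L, (deriv f t)^2 with hA
  apply le_of_forall_pos_le_add
  intro δ hδ
  set K := c^2 * D + C^2 + 1 with hK
  have hK1 : 1 ≤ K := by nlinarith
  set ε := min (L/2) (δ / K) with hε
  have hε0 : 0 < ε := lt_min (by linarith) (div_pos hδ (by linarith))
  have hεL : ε < L := lt_of_le_of_lt (min_le_left _ _) (by linarith)
  have hKε : K * ε ≤ δ := by
    have h1 : ε ≤ δ / K := min_le_right _ _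
    calc K * ε ≤ K * (δ / K) := by nlinarith
    _ = δ := by field_simp
  -- splitting
  have hintf2 : ∀ a b : ℝ, IntervalIntegrable (fun t => (f t)^2) volume a b :=
    fun a b => (hcf.pow 2).intervalIntegrable a b
  have hintd2 : ∀ a b : ℝ, IntervalIntegrable (fun t => (deriv f t)^2) volume a b :=
    fun a b => (hcontd.pow 2).intervalIntegrable a b
  have hsplitf : (∫ t in (0:ℝ)..L, (f t)^2)
      = (∫ t in (0:ℝ)..ε, (f t)^2) + ∫ t in ε..L, (f t)^2 :=
    (intervalIntegral.integral_add_adjacent_intervals (hintf2 0 ε) (hintf2 ε L)).symm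
  have hsplitd : A = (∫ t in (0:ℝ)..ε, (deriv f t)^2) + ∫ t in ε..L, (deriv f t)^2 :=
    (intervalIntegral.integral_add_adjacent_intervals (hintd2 0 ε) (hintd2 ε L)).symm
  have h0ε : (∫ t in (0:ℝ)..ε, (f t)^2) ≤ D * ε := by
    have := intervalIntegral.norm_integral_le_of_norm_le_const
      (C := D) (f := fun t => (f t)^2) (a := (0:ℝ)) (b := ε) ?_
    · have h2 : |ε - 0| = ε := by rw [sub_zero, abs_of_nonneg hε0.le]
      rw [h2] at this
      calc (∫ t in (0:ℝ)..ε, (f t)^2) ≤ ‖∫ t in (0:ℝ)..ε, (f t)^2‖ := le_abs_self _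
      _ ≤ D * ε := this
    · intro t ht
      rw [Set.uIoc_of_le hε0.le] at ht
      rw [Real.norm_eq_abs, abs_of_nonneg (sq_nonneg _)]
      exact hD' t ⟨ht.1.le, le_trans ht.2 hεL.le⟩
  have hd0ε : 0 ≤ ∫ t in (0:ℝ)..ε, (deriv f t)^2 :=
    intervalIntegral.integral_nonneg hε0.le (fun t _ => sq_nonneg _)
  -- bound f ε
  have hfε : |f ε| ≤ C * ε := by
    have hder : ∀ t ∈ Set.uIcc (0:ℝ) ε, DifferentiableAt ℝ f t :=
      fun t _ => (hf.differentiable one_ne_zero) t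
    have heq : ∫ t in (0:ℝ)..ε, deriv f t = f ε - f 0 :=
      intervalIntegral.integral_deriv_eq_sub hder (hcontd.intervalIntegrable 0 ε)
    rw [hf0, sub_zero] at heq
    rw [← heq]
    have := intervalIntegral.norm_integral_le_of_norm_le_const
      (C := C) (f := deriv f) (a := (0:ℝ)) (b := ε) ?_
    · rwa [sub_zero, abs_of_nonneg hε0.le] at this
    · intro t ht
      rw [Set.uIoc_of_le hε0.le] at ht
      exact hC t ⟨ht.1.le, le_trans ht.2 hεL.le⟩
  have hcotb : c * (Real.cos (c*ε) / Real.sin (c*ε)) ≤ 1/ε := by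
    have hcε : c * ε < π/2 := lt_of_lt_of_le (by nlinarith) hcL
    have hcos : 0 < Real.cos (c*ε) :=
      Real.cos_pos_of_mem_Ioo ⟨by nlinarith [Real.pi_pos], hcε⟩
    have hsin : 0 < Real.sin (c*ε) :=
      Real.sin_pos_of_pos_of_lt_pi (by positivity) (by linarith [Real.pi_pos])
    have htan := Real.lt_tan (by positivity : 0 < c*ε) hcε
    rw [Real.tan_eq_sin_div_cos] at htan
    have h1 : (c*ε) * Real.cos (c*ε) < Real.sin (c*ε) := by
      rw [lt_div_iff₀ hcos] at htan
      linarith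
    rw [← mul_div_assoc, div_le_div_iff₀ hsin hε0]
    nlinarith
  have hbd : (f ε)^2 * (c * (Real.cos (c*ε) / Real.sin (c*ε))) ≤ C^2 * ε := by
    have h1 : (f ε)^2 ≤ (C*ε)^2 := by
      rw [← sq_abs (f ε)]
      apply sq_le_sq' (by linarith [abs_nonneg (f ε)]) hfε
    have h2 : 0 ≤ c * (Real.cos (c*ε) / Real.sin (c*ε)) := by
      have hcε : c * ε < π/2 := lt_of_lt_of_le (by nlinarith) hcL
      have hcos : 0 ≤ Real.cos (c*ε) :=
        (Real.cos_pos_of_mem_Ioo ⟨by nlinarith [Real.pi_pos], hcε⟩).le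
      have hsin : 0 < Real.sin (c*ε) :=
        Real.sin_pos_of_pos_of_lt_pi (by positivity) (by linarith [Real.pi_pos])
      positivity
    calc (f ε)^2 * (c * (Real.cos (c*ε) / Real.sin (c*ε)))
        ≤ (C*ε)^2 * (1/ε) := by
          apply mul_le_mul h1 hcotb h2 (sq_nonneg _)
      _ = C^2 * ε := by field_simp
  have hkey := oneD_eps c hcpos L hL hcL f hf ε hε0 hεL
  have hεd : (∫ t in ε..L, (deriv f t)^2) ≤ A := by rw [hsplitd]; linarith
  calc c^2 * ∫ t in (0:ℝ)..L, (f t)^2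
      = c^2 * (∫ t in (0:ℝ)..ε, (f t)^2) + c^2 * ∫ t in ε..L, (f t)^2 := by
        rw [hsplitf]; ring
    _ ≤ c^2 * (D * ε) + ((∫ t in ε..L, (deriv f t)^2) + (f ε)^2 * (c * (Real.cos (c*ε) / Real.sin (c*ε)))) := by
        have := mul_le_mul_of_nonneg_left h0ε (sq_nonneg c)
        linarith
    _ ≤ c^2 * (D * ε) + (A + C^2 * ε) := by linarith
    _ ≤ A + δ := by nlinarith


noncomputable def pe (n : ℕ) : Euc (n+1) ≃ᵐ ℝ × Euc n :=
  (MeasurableEquiv.toLp 2 (Fin (n+1) → ℝ)).symm.trans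
    ((MeasurableEquiv.piFinSuccAbove (fun _ => ℝ) (Fin.last n)).trans
      ((MeasurableEquiv.refl ℝ).prodCongr (MeasurableEquiv.toLp 2 (Fin n → ℝ)).symm.symm))


lemma pe_mp (n : ℕ) : MeasurePreserving (pe n) volume volume := by
  unfold pe
  simp only [MeasurableEquiv.coe_trans]
  exact (((MeasurePreserving.id volume).prod
      (EuclideanSpace.volume_preserving_symm_measurableEquiv_toLp (Fin n)).symm).comp
    (volume_preserving_piFinSuccAbove (fun _ => ℝ) (Fin.last n))).comp
    (EuclideanSpace.volume_preserving_symm_measurableEquiv_toLp (Fin (n+1)))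


lemma pe_apply (n : ℕ) (x : Euc (n+1)) :
    pe n x = (x (Fin.last n), (WithLp.toLp 2 (fun i : Fin n => x i.castSucc) : Euc n)) := by
  unfold pe
  ext
  · rfl
  · simp [MeasurableEquiv.piFinSuccAbove, Fin.succAbove_last, MeasurableEquiv.toLp,
      MeasurableEquiv.prodCongr, MeasurableEquiv.refl]
    rfl


lemma pe_symm_apply (n : ℕ) (t : ℝ) (x' : Euc n) :
    ((pe n).symm (t, x')) (Fin.last n) = t ∧
    ∀ i : Fin n, ((pe n).symm (t, x')) i.castSucc = x' i := by
  constructor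
  · have := pe_apply n ((pe n).symm (t, x'))
    rw [MeasurableEquiv.apply_symm_apply] at this
    exact (congrArg Prod.fst this).symm
  · intro i
    have := pe_apply n ((pe n).symm (t, x'))
    rw [MeasurableEquiv.apply_symm_apply] at this
    have h2 := congrArg Prod.snd this
    exact (congrArg (fun y : Euc n => y i) h2).symm


lemma pe_symm_line (n : ℕ) (x' : Euc n) (t : ℝ) :
    (pe n).symm (t, x') = (pe n).symm (0, x') + t • (EuclideanSpace.single (Fin.last n) (1:ℝ)) := by
  apply PiLp.ext
  intro j
  have h1 := pe_symm_apply n t x'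
  have h0 := pe_symm_apply n 0 x'
  rw [PiLp.add_apply, PiLp.smul_apply]
  induction j using Fin.lastCases with
  | last =>
    rw [h1.1, h0.1, EuclideanSpace.single_apply]
    simp
  | cast i =>
    rw [h1.2 i, h0.2 i, EuclideanSpace.single_apply]
    have : (i.castSucc : Fin (n+1)) ≠ Fin.last n := Fin.castSucc_lt_last i |>.ne
    simp [this]


/-- mixed Dirichlet–Neumann Poincaré-type inequality on a subgraph domain
`Ω = {(x',t) : x' ∈ Ω', 0 < t < F(x')} ⊆ ℝ^{n+1}` (here `n = d - 1 ≥ 1`): for every `C¹`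
function `ψ` vanishing on the base `Ω' × {0}`,
`∫_Ω ‖∇ψ‖² ≥ (π²/(4M²)) ∫_Ω ψ²` whenever `0 ≤ F ≤ M` on `Ω'`. -/
theorem nodal_domain_lower_bound
    (n : ℕ) (hn : 1 ≤ n) (Ω' : Set (Euc n)) (hne : Ω'.Nonempty)
    (hb : Bornology.IsBounded Ω') (ho : IsOpen Ω')
    (M : ℝ) (hM : 0 < M) (F : Euc n → ℝ)
    (hF : ∀ x' ∈ Ω', 0 ≤ F x' ∧ F x' ≤ M)
    (Ω : Set (Euc (n + 1)))
    (hΩ : Ω = {x : Euc (n + 1) | (WithLp.toLp 2 (fun i : Fin n => x i.castSucc) : Euc n) ∈ Ω' ∧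
        0 < x (Fin.last n) ∧
        x (Fin.last n) < F (WithLp.toLp 2 (fun i : Fin n => x i.castSucc))})
    (ψ : Euc (n + 1) → ℝ) (hψ : ContDiff ℝ 1 ψ)
    (hψ0 : ∀ x : Euc (n + 1), (WithLp.toLp 2 (fun i : Fin n => x i.castSucc) : Euc n) ∈ Ω' →
      x (Fin.last n) = 0 → ψ x = 0) :
    (∫ x in Ω, ‖fderiv ℝ ψ x‖ ^ 2) ≥
      Real.pi ^ 2 / (4 * M ^ 2) * ∫ x in Ω, (ψ x) ^ 2 := by
  classical
  set c : ℝ := π / (2*M) with hc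
  have hcpos : 0 < c := by positivity
  have hcM : c * M = π/2 := by rw [hc]; field_simp
  set ν : Measure (ℝ × Euc n) := volume with hν
  set g₁ : ℝ × Euc n → ℝ := fun p => ‖fderiv ℝ ψ ((pe n).symm p)‖^2 with hg₁
  set g₂ : ℝ × Euc n → ℝ := fun p => (ψ ((pe n).symm p))^2 with hg₂
  set Ωh : Set (ℝ × Euc n) := {p | p.2 ∈ Ω' ∧ 0 < p.1 ∧ p.1 < F p.2} with hΩh
  -- transfer the integrals through pe
  have hpre : Ω = pe n ⁻¹' Ωh := by
    rw [hΩ]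
    ext x
    simp only [Set.mem_setOf_eq, Set.mem_preimage, hΩh, pe_apply]
  have htrans : ∀ g : ℝ × Euc n → ℝ,
      (∫ x in Ω, g (pe n x)) = ∫ p in Ωh, g p := by
    intro g
    rw [hpre]
    exact (pe_mp n).setIntegral_preimage_emb (pe n).measurableEmbedding g Ωh
  have hfun₁ : (fun x => g₁ (pe n x)) = fun x => ‖fderiv ℝ ψ x‖^2 := by
    funext x; simp [hg₁]
  have hfun₂ : (fun x => g₂ (pe n x)) = fun x => (ψ x)^2 := by
    funext x; simp [hg₂]
  have hI₁ : (∫ x in Ω, ‖fderiv ℝ ψ x‖^2) = ∫ p in Ωh, g₁ p := by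
    rw [← htrans g₁, hfun₁]
  have hI₂ : (∫ x in Ω, (ψ x)^2) = ∫ p in Ωh, g₂ p := by
    rw [← htrans g₂, hfun₂]
  -- measurable hull of Ωh of subgraph form
  set strip : Set (ℝ × Euc n) := (Set.Ioo (0:ℝ) M) ×ˢ Ω' with hstrip
  have hstripm : MeasurableSet strip := measurableSet_Ioo.prod ho.measurableSet
  have hsub : Ωh ⊆ strip := by
    rintro ⟨t, x'⟩ ⟨h1, h2, h3⟩
    exact ⟨⟨h2, lt_of_lt_of_le h3 (hF x' h1).2⟩, h1⟩
  have hstripfin : ν strip < ⊤ := by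
    rw [hν, hstrip, Measure.volume_eq_prod, Measure.prod_prod]
    exact ENNReal.mul_lt_top (by simp) hb.measure_lt_top
  set T0 : Set (ℝ × Euc n) := toMeasurable ν Ωh ∩ strip with hT0
  have hT0m : MeasurableSet T0 :=
    (measurableSet_toMeasurable ν Ωh).inter hstripm
  have hΩhT0 : Ωh ⊆ T0 := Set.subset_inter (subset_toMeasurable ν Ωh) hsub
  have hT0fin : ν T0 < ⊤ := lt_of_le_of_lt (measure_mono Set.inter_subset_right) hstripfin
  have hT0eq : ν T0 = ν Ωh :=
    le_antisymm (le_trans (measure_mono Set.inter_subset_left) (measure_toMeasurable Ωh).le)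
      (measure_mono hΩhT0)
  -- slices
  set Sl : Euc n → Set ℝ := fun x' => (fun t => (t, x')) ⁻¹' T0 with hSl
  have hSlsub : ∀ x', Sl x' ⊆ Set.Ioo 0 M := by
    intro x' t ht
    exact (Set.inter_subset_right ht : (t, x') ∈ strip).1
  have hSlempty : ∀ x', x' ∉ Ω' → Sl x' = ∅ := by
    intro x' hx'
    ext t
    simp only [Set.mem_empty_iff_false, iff_false]
    intro ht
    exact hx' (Set.inter_subset_right ht : (t, x') ∈ strip).2
  have hSlfin : ∀ x', volume (Sl x') ≤ ENNReal.ofReal M := by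
    intro x'
    calc volume (Sl x') ≤ volume (Set.Ioo 0 M) := measure_mono (hSlsub x')
    _ = ENNReal.ofReal M := by rw [Real.volume_Ioo, sub_zero]
  set G : Euc n → ℝ := fun x' => (volume (Sl x')).toReal with hG
  have hSlvol : ∀ x', volume (Sl x') = ENNReal.ofReal (G x') := by
    intro x'
    rw [hG, ENNReal.ofReal_toReal]
    exact ne_top_of_le_ne_top (by simp) (hSlfin x')
  have hG0 : ∀ x', 0 ≤ G x' := fun x' => ENNReal.toReal_nonneg
  have hGM : ∀ x', G x' ≤ M := by
    intro x'
    rw [hG]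
    calc (volume (Sl x')).toReal ≤ (ENNReal.ofReal M).toReal :=
      ENNReal.toReal_mono (by simp) (hSlfin x')
    _ = M := ENNReal.toReal_ofReal hM.le
  have hFG : ∀ x' ∈ Ω', F x' ≤ G x' := by
    intro x' hx'
    have hsub2 : Set.Ioo 0 (F x') ⊆ Sl x' := by
      intro t ht
      exact hΩhT0 ⟨hx', ht.1, ht.2⟩
    have this : volume (Set.Ioo 0 (F x')) ≤ volume (Sl x') := measure_mono hsub2
    rw [Real.volume_Ioo, sub_zero, hSlvol x'] at this
    have h2 := ENNReal.toReal_mono (by simp) this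
    rwa [ENNReal.toReal_ofReal (hF x' hx').1, ENNReal.toReal_ofReal (hG0 x')] at h2
  have hGmeas : Measurable G := by
    apply ENNReal.measurable_toReal.comp
    exact measurable_measure_prodMk_right hT0m
  set T1 : Set (ℝ × Euc n) := {p | p.2 ∈ Ω' ∧ 0 < p.1 ∧ p.1 < G p.2} with hT1
  have hT1m : MeasurableSet T1 := by
    apply MeasurableSet.inter (measurable_snd ho.measurableSet)
    exact MeasurableSet.inter (measurableSet_lt measurable_const measurable_fst)
      (measurableSet_lt measurable_fst (hGmeas.comp measurable_snd))
  have hΩhT1 : Ωh ⊆ T1 := by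
    rintro ⟨t, x'⟩ ⟨h1, h2, h3⟩
    exact ⟨h1, h2, lt_of_lt_of_le h3 (hFG x' h1)⟩
  -- slices of T1
  have hSlT1 : ∀ x', (fun t => (t, x')) ⁻¹' T1
      = if x' ∈ Ω' then Set.Ioo 0 (G x') else ∅ := by
    intro x'
    by_cases hx' : x' ∈ Ω' <;> ext t <;> simp [hT1, hx', Set.mem_Ioo, and_comm]
  have hT1eq : ν T1 = ν T0 := by
    rw [hν, Measure.volume_eq_prod, Measure.prod_apply_symm hT1m, Measure.prod_apply_symm hT0m]
    apply lintegral_congr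
    intro x'
    by_cases hx' : x' ∈ Ω'
    · rw [hSlT1 x', if_pos hx', Real.volume_Ioo, sub_zero, ← hSlvol x']
    · rw [hSlT1 x', if_neg hx', show ((fun t => (t, x')) ⁻¹' T0 : Set ℝ) = ∅ from hSlempty x' hx']
  have hT1fin : ν T1 < ⊤ := by rw [hT1eq]; exact hT0fin
  -- restrict equality
  have hrestrict : ν.restrict Ωh = ν.restrict T1 := by
    ext s hs
    rw [Measure.restrict_apply hs, Measure.restrict_apply hs]
    have e1 : ν (Ωh ∩ s) + ν (Ωh \ s) = ν Ωh := measure_inter_add_diff Ωh hs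
    have e2 : ν (T1 ∩ s) + ν (T1 \ s) = ν T1 := measure_inter_add_diff T1 hs
    have l1 : ν (Ωh ∩ s) ≤ ν (T1 ∩ s) := measure_mono (Set.inter_subset_inter_left s hΩhT1)
    have l2 : ν (Ωh \ s) ≤ ν (T1 \ s) := measure_mono (Set.diff_subset_diff_left hΩhT1)
    have hne1 : ν (T1 \ s) ≠ ⊤ :=
      ne_top_of_le_ne_top hT1fin.ne (measure_mono Set.diff_subset)
    have heq : ν Ωh = ν T1 := by rw [hT1eq, hT0eq]
    have key : ν (T1 ∩ s) + ν (T1 \ s) ≤ ν (Ωh ∩ s) + ν (T1 \ s) := by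
      calc ν (T1 ∩ s) + ν (T1 \ s) = ν Ωh := by rw [e2, heq]
      _ = ν (Ωh ∩ s) + ν (Ωh \ s) := e1.symm
      _ ≤ ν (Ωh ∩ s) + ν (T1 \ s) := add_le_add le_rfl l2
    have l3 : ν (T1 ∩ s) ≤ ν (Ωh ∩ s) := ENNReal.le_of_add_le_add_right hne1 key
    rw [Set.inter_comm s Ωh, Set.inter_comm s T1]
    exact le_antisymm l1 l3
  -- continuity and measurability of integrands
  have hcont₁ : Continuous (fun x : Euc (n+1) => ‖fderiv ℝ ψ x‖^2) :=
    ((hψ.continuous_fderiv one_ne_zero).norm).pow 2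
  have hcont₂ : Continuous (fun x : Euc (n+1) => (ψ x)^2) := hψ.continuous.pow 2
  have hmg₁ : Measurable g₁ := hcont₁.measurable.comp (pe n).symm.measurable
  have hmg₂ : Measurable g₂ := hcont₂.measurable.comp (pe n).symm.measurable
  -- boundedness of the integrands on T1
  obtain ⟨R, hR⟩ := hb.subset_closedBall 0
  have hR0 : 0 ≤ R := by
    obtain ⟨y, hy⟩ := hne
    have := hR hy
    rw [Metric.mem_closedBall, dist_zero_right] at this
    exact le_trans (norm_nonneg _) this
  set K : Set (Euc (n+1)) := Metric.closedBall 0 (R + M) with hK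
  have hT1K : ∀ p ∈ T1, (pe n).symm p ∈ K := by
    rintro ⟨t, x'⟩ ⟨h1, h2, h3⟩
    have ht : 0 < t ∧ t ≤ M := ⟨h2, le_trans h3.le (hGM x')⟩
    have hx'R : ‖x'‖ ≤ R := by
      have := hR h1
      rwa [Metric.mem_closedBall, dist_zero_right] at this
    rw [hK, Metric.mem_closedBall, dist_zero_right]
    set x := (pe n).symm (t, x') with hx
    have hcoord := pe_symm_apply n t x'
    have hnx : ‖x‖^2 = t^2 + ‖x'‖^2 := by
      rw [EuclideanSpace.norm_eq, EuclideanSpace.norm_eq,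
        Real.sq_sqrt (by positivity), Real.sq_sqrt (by positivity)]
      rw [Fin.sum_univ_castSucc]
      rw [← hx] at hcoord
      rw [hcoord.1]
      simp only [Real.norm_eq_abs, sq_abs]
      rw [add_comm]
      congr 1
      apply Finset.sum_congr rfl
      intro i _
      rw [hcoord.2 i]
    have h4 : ‖x‖^2 ≤ (R + M)^2 := by
      rw [hnx]
      nlinarith [ht.1, ht.2, hx'R, norm_nonneg x']
    nlinarith [norm_nonneg x, hR0, hM.le]
  obtain ⟨B₁, hB₁⟩ := (isCompact_closedBall (0 : Euc (n+1)) (R + M)).exists_bound_of_continuousOn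
    hcont₁.continuousOn
  obtain ⟨B₂, hB₂⟩ := (isCompact_closedBall (0 : Euc (n+1)) (R + M)).exists_bound_of_continuousOn
    hcont₂.continuousOn
  have hg₁B : ∀ p ∈ T1, g₁ p ≤ B₁ := by
    intro p hp
    have := hB₁ _ (hT1K p hp)
    rwa [Real.norm_eq_abs, abs_of_nonneg (by positivity)] at this
  have hg₂B : ∀ p ∈ T1, g₂ p ≤ B₂ := by
    intro p hp
    have := hB₂ _ (hT1K p hp)
    rwa [Real.norm_eq_abs, abs_of_nonneg (sq_nonneg _)] at this
  -- lintegrals over T1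
  set Λ₁ : ENNReal := ∫⁻ p in T1, ENNReal.ofReal (g₁ p) ∂ν with hΛ₁
  set Λ₂ : ENNReal := ∫⁻ p in T1, ENNReal.ofReal (g₂ p) ∂ν with hΛ₂
  have hfin : ∀ (g : ℝ × Euc n → ℝ) (B : ℝ), (∀ p ∈ T1, g p ≤ B) →
      (∫⁻ p in T1, ENNReal.ofReal (g p) ∂ν) < ⊤ := by
    intro g B hgB
    calc (∫⁻ p in T1, ENNReal.ofReal (g p) ∂ν)
        ≤ ∫⁻ _ in T1, ENNReal.ofReal B ∂ν :=
          setLIntegral_mono measurable_const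
            (fun p hp => ENNReal.ofReal_le_ofReal (hgB p hp))
      _ = ENNReal.ofReal B * ν T1 := setLIntegral_const T1 _
      _ < ⊤ := ENNReal.mul_lt_top ENNReal.ofReal_lt_top hT1fin
  have hΛ₁fin : Λ₁ < ⊤ := hfin g₁ B₁ hg₁B
  have hΛ₂fin : Λ₂ < ⊤ := hfin g₂ B₂ hg₂B
  -- Tonelli representation
  set sl : Euc n → Set ℝ := fun x' => if x' ∈ Ω' then Set.Ioo 0 (G x') else ∅ with hsl
  have hslm : ∀ x', MeasurableSet (sl x') := by
    intro x'
    rw [hsl]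
    by_cases hx' : x' ∈ Ω' <;> simp [hx', measurableSet_Ioo]
  have hrepr : ∀ (g : ℝ × Euc n → ℝ), Measurable g →
      (∫⁻ p in T1, ENNReal.ofReal (g p) ∂ν)
        = ∫⁻ x', ∫⁻ t in sl x', ENNReal.ofReal (g (t, x')) := by
    intro g hg
    have hgm : Measurable (fun p => ENNReal.ofReal (g p)) :=
      ENNReal.measurable_ofReal.comp hg
    rw [← lintegral_indicator hT1m]
    rw [hν, Measure.volume_eq_prod]
    rw [lintegral_prod_symm _ ((hgm.indicator hT1m).aemeasurable)]
    apply lintegral_congr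
    intro x'
    have hind : (fun t => T1.indicator (fun p => ENNReal.ofReal (g p)) (t, x'))
        = (sl x').indicator (fun t => ENNReal.ofReal (g (t, x'))) := by
      funext t
      by_cases ht : (t, x') ∈ T1
      · rw [Set.indicator_of_mem ht, Set.indicator_of_mem]
        have := hSlT1 x'
        have h2 : t ∈ (fun s => (s, x')) ⁻¹' T1 := ht
        rw [this] at h2
        exact h2
      · rw [Set.indicator_of_notMem ht, Set.indicator_of_notMem]
        intro hmem
        apply ht
        have h2 : t ∈ (if x' ∈ Ω' then Set.Ioo 0 (G x') else ∅) := hmem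
        rw [← hSlT1 x'] at h2
        exact h2
    rw [hind, lintegral_indicator (hslm x')]
  -- integrability on slices
  have hintOn : ∀ (φ' : ℝ → ℝ), Continuous φ' → ∀ L : ℝ,
      IntegrableOn φ' (Set.Ioo 0 L) volume := by
    intro φ' hφ' L
    exact (hφ'.integrableOn_Icc).mono_set Set.Ioo_subset_Icc_self
  set u : Euc (n+1) := EuclideanSpace.single (Fin.last n) (1:ℝ) with hu
  have hnu : ‖u‖ = 1 := by rw [hu, EuclideanSpace.norm_single]; norm_num
  -- per-slice inequality
  have hslice : ∀ x' : Euc n,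
      ENNReal.ofReal (c^2) * (∫⁻ t in sl x', ENNReal.ofReal (g₂ (t, x')))
        ≤ ∫⁻ t in sl x', ENNReal.ofReal (g₁ (t, x')) := by
    intro x'
    by_cases hx' : x' ∈ Ω'
    swap
    · rw [hsl]; simp [hx']
    rw [hsl]
    simp only [if_pos hx']
    set L : ℝ := G x' with hL
    set γ : ℝ → Euc (n+1) := fun t => (pe n).symm (t, x') with hγ
    have hlin : γ = fun t => γ 0 + t • u := by
      funext t
      rw [hγ, hu]
      exact pe_symm_line n x' t
    have hγd : ∀ t : ℝ, HasDerivAt γ u t := by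
      intro t
      rw [hlin]
      have h1 : HasDerivAt (fun s : ℝ => s • u) ((1:ℝ) • u) t :=
        (hasDerivAt_id t).smul_const u
      rw [one_smul] at h1
      exact h1.const_add (γ 0)
    set f : ℝ → ℝ := fun t => ψ (γ t) with hf
    have hfC : ContDiff ℝ 1 f := by
      rw [hf, hlin]
      exact hψ.comp (contDiff_const.add (contDiff_id.smul contDiff_const))
    have hfd : ∀ t, HasDerivAt f ((fderiv ℝ ψ (γ t)) u) t := by
      intro t
      exact ((hψ.differentiable one_ne_zero (γ t)).hasFDerivAt).comp_hasDerivAt t (hγd t)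
    have hderiv_eq : ∀ t, deriv f t = (fderiv ℝ ψ (γ t)) u := fun t => (hfd t).deriv
    have hf0 : f 0 = 0 := by
      apply hψ0
      · have : (WithLp.toLp 2 (fun i : Fin n => (γ 0) i.castSucc) : Euc n) = x' := by
          ext i
          exact (pe_symm_apply n 0 x').2 i
        rw [this]
        exact hx'
      · exact (pe_symm_apply n 0 x').1
    have hptw : ∀ t, (deriv f t)^2 ≤ g₁ (t, x') := by
      intro t
      rw [hderiv_eq t, hg₁]
      have h1 := ContinuousLinearMap.le_opNorm (fderiv ℝ ψ (γ t)) u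
      rw [hnu, mul_one] at h1
      have h2 : |(fderiv ℝ ψ (γ t)) u| ≤ ‖fderiv ℝ ψ (γ t)‖ := h1
      have h3 : ((fderiv ℝ ψ (γ t)) u)^2 ≤ ‖fderiv ℝ ψ (γ t)‖^2 := by
        rw [← sq_abs]
        apply pow_le_pow_left₀ (abs_nonneg _) h2
      exact h3
    have hg₂eq : ∀ t, g₂ (t, x') = (f t)^2 := fun t => rfl
    have honeD := oneD c hcpos L (hG0 x') (by
      calc c * L ≤ c * M := by nlinarith [hGM x']
      _ = π/2 := hcM) f hfC hf0
    have hint2 : IntegrableOn (fun t => (f t)^2) (Set.Ioo 0 L) volume :=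
      hintOn _ (hfC.continuous.pow 2) L
    have hint1 : IntegrableOn (fun t => (deriv f t)^2) (Set.Ioo 0 L) volume :=
      hintOn _ ((hfC.continuous_deriv le_rfl).pow 2) L
    calc ENNReal.ofReal (c^2) * (∫⁻ t in Set.Ioo 0 L, ENNReal.ofReal (g₂ (t, x')))
        = ENNReal.ofReal (c^2) * (∫⁻ t in Set.Ioo 0 L, ENNReal.ofReal ((f t)^2)) := by
          congr 1
      _ = ENNReal.ofReal (c^2) * ENNReal.ofReal (∫ t in Set.Ioo 0 L, (f t)^2) := by
          rw [ofReal_integral_eq_lintegral_ofReal hint2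
            (Filter.Eventually.of_forall (fun t => sq_nonneg _))]
      _ = ENNReal.ofReal (c^2 * ∫ t in Set.Ioo 0 L, (f t)^2) := by
          rw [ENNReal.ofReal_mul (sq_nonneg c)]
      _ ≤ ENNReal.ofReal (∫ t in Set.Ioo 0 L, (deriv f t)^2) :=
          ENNReal.ofReal_le_ofReal honeD
      _ = ∫⁻ t in Set.Ioo 0 L, ENNReal.ofReal ((deriv f t)^2) := by
          rw [ofReal_integral_eq_lintegral_ofReal hint1
            (Filter.Eventually.of_forall (fun t => sq_nonneg _))]
      _ ≤ ∫⁻ t in Set.Ioo 0 L, ENNReal.ofReal (g₁ (t, x')) :=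
          lintegral_mono (fun t => ENNReal.ofReal_le_ofReal (hptw t))
  -- combine
  have hmain : ENNReal.ofReal (c^2) * Λ₂ ≤ Λ₁ := by
    rw [hΛ₁, hΛ₂, hrepr g₁ hmg₁, hrepr g₂ hmg₂,
      ← lintegral_const_mul' (ENNReal.ofReal (c^2)) _ ENNReal.ofReal_ne_top]
    exact lintegral_mono hslice
  -- back to real integrals
  have hIeq₁ : ∫ p in Ωh, g₁ p = Λ₁.toReal := by
    rw [show (volume : Measure (ℝ × Euc n)).restrict Ωh = ν.restrict Ωh from rfl, hrestrict]
    rw [hΛ₁, integral_eq_lintegral_of_nonneg_ae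
      (Filter.Eventually.of_forall (fun p => sq_nonneg _))
      (hmg₁.aestronglyMeasurable)]
  have hIeq₂ : ∫ p in Ωh, g₂ p = Λ₂.toReal := by
    rw [show (volume : Measure (ℝ × Euc n)).restrict Ωh = ν.restrict Ωh from rfl, hrestrict]
    rw [hΛ₂, integral_eq_lintegral_of_nonneg_ae
      (Filter.Eventually.of_forall (fun p => sq_nonneg _))
      (hmg₂.aestronglyMeasurable)]
  have hfinal : c^2 * Λ₂.toReal ≤ Λ₁.toReal := by
    have h1 := ENNReal.toReal_mono hΛ₁fin.ne hmain
    rwa [ENNReal.toReal_mul, ENNReal.toReal_ofReal (sq_nonneg c)] at h1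
  have hcsq : c^2 = π^2 / (4 * M^2) := by
    rw [hc]
    field_simp
    ring
  rw [ge_iff_le, hI₁, hI₂, hIeq₁, hIeq₂, ← hcsq]
  exact hfinal

end
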